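/- Let A ∈ GL₂ℤ and let v, v' ∈ ℤ² each satisfy ℤv + ℤ(Av) = ℤ² and ℤv' + ℤ(Av') = ℤ². Then the generating pairs ((v, 0), ((0,0), 1)) and ((v', 0), ((0,0), 1)) of G_A = ℤ² ⋊_A ℤ are Nielsen equivalent if and only if v' = Aᵏ v or v' = −Aᵏ v for some k ∈ ℤ, i.e., if and only if v and v' lie in the same orbit of the subgroup of GL₂ℤ generated by A and −Id. -/

import Mathlib

open Matrix

abbrev GL2Z := GL (Fin 2) ℤ

/-- The automorphism of `ℤ²` induced by `A ∈ GL₂ℤ`. -/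
def glToAddAut (A : GL2Z) : (Fin 2 → ℤ) ≃+ (Fin 2 → ℤ) :=
  (Matrix.GeneralLinearGroup.toLin A).toLinearEquiv.toAddEquiv

/-- The action of `ℤ` on `ℤ²` with `1` acting as `A`. -/
def phiA (A : GL2Z) : Multiplicative ℤ →* MulAut (Multiplicative (Fin 2 → ℤ)) :=
  zpowersHom _ (AddEquiv.toMultiplicative (glToAddAut A))

/-- `G_A = ℤ² ⋊_A ℤ`. -/
abbrev GA (A : GL2Z) := (Multiplicative (Fin 2 → ℤ)) ⋊[phiA A] (Multiplicative ℤ)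

/-- Nielsen equivalence of ordered generating `n`-tuples: the two induced epimorphisms
from the free group differ by precomposition with an automorphism. -/
def NielsenEquiv {G : Type*} [Group G] {n : ℕ} (S T : Fin n → G) : Prop :=
  ∃ φ : FreeGroup (Fin n) ≃* FreeGroup (Fin n),
    (FreeGroup.lift S).comp φ.toMonoidHom = FreeGroup.lift T

/-- `H_A = ⟨A, -Id⟩ ≤ GL₂ℤ`. -/
def HA (A : GL2Z) : Subgroup GL2Z := Subgroup.closure {A, -1}

/-!
Write `a = of 0`, `b = of 1` for the free generators and `Λ = ℤ[T, T⁻¹]`. Sending `a ↦ ((1, 0), 0)`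
and `b ↦ ((0, 1), 1)` into the Fox group `Λ² ⋊ ℤ` (where `1` acts by `T`) maps a word `w` to
`((∂w/∂a, ∂w/∂b), ε(w))`: its Fox derivatives abelianised by `a ↦ 1, b ↦ T`, and the exponent sum
of `b`. Composing with `((p, q), n) ↦ (p(A) v, n)` gives the pair `((v, 0), ((0,0), 1))` of `G_A`,
so the `ℤ²`-part of the image of `w` in `G_A` is `(∂w/∂a)(A) v`.
A Nielsen equivalence `φ` preserves `ε`. The word `w = φ⁻¹(a)` has `ε(w) = 0`, so Fox's fundamental
formula `(∂w/∂b)(T - 1) = T^{ε(w)} - 1` gives `∂w/∂b = 0`, and the chain rule then gives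
`1 = (∂w/∂a) · ∂φ(a)/∂a`. Hence `∂φ(a)/∂a = ±Tᵏ`, and `v' = ±Aᵏ v`.
Conversely, conjugating `a` by `bᵏ` and inverting `a` realise `v ↦ Aᵏ v` and `v ↦ -v`.
-/

open LaurentPolynomial Multiplicative

namespace SemidirectProduct

variable {N₁ N₂ : Type*} [Group N₁] [Group N₂]
  {φ₁ : Multiplicative ℤ →* MulAut N₁} {φ₂ : Multiplicative ℤ →* MulAut N₂}

theorem apply_action_of_apply_action_one (f : N₁ →* N₂)
    (hf : ∀ x, f (φ₁ (ofAdd 1) x) = φ₂ (ofAdd 1) (f x)) (g : Multiplicative ℤ) (x : N₁) :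
    f (φ₁ g x) = φ₂ g (f x) := by
  suffices ∀ n : ℤ, ∀ x, f ((φ₁ (ofAdd 1) ^ n) x) = (φ₂ (ofAdd 1) ^ n) (f x) by
    simpa [← map_zpow, ← ofAdd_zsmul] using this (toAdd g) x
  intro n
  induction n using Int.induction_on with
  | zero => simp
  | succ n ih =>
    intro x
    rw [_root_.zpow_add_one, _root_.zpow_add_one, MulAut.mul_apply, MulAut.mul_apply, ih, hf]
  | pred n ih =>
    intro x
    have hf' : f ((φ₁ (ofAdd 1))⁻¹ x) = (φ₂ (ofAdd 1))⁻¹ (f x) := by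
      rw [← MulAut.inv_apply_self _ (φ₂ (ofAdd 1)) (f _), ← hf, MulAut.apply_inv_self]
    rw [_root_.zpow_sub_one, _root_.zpow_sub_one, MulAut.mul_apply, MulAut.mul_apply, ih, hf']

def mapLeft (f : N₁ →* N₂) (hf : ∀ x, f (φ₁ (ofAdd 1) x) = φ₂ (ofAdd 1) (f x)) :
    N₁ ⋊[φ₁] Multiplicative ℤ →* N₂ ⋊[φ₂] Multiplicative ℤ :=
  map f (.id _) fun g => MonoidHom.ext (apply_action_of_apply_action_one f hf g)

@[simp] theorem mapLeft_left (f : N₁ →* N₂) (hf) (g : N₁ ⋊[φ₁] Multiplicative ℤ) :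
    (mapLeft (φ₂ := φ₂) f hf g).left = f g.left := rfl

@[simp] theorem mapLeft_right (f : N₁ →* N₂) (hf) (g : N₁ ⋊[φ₁] Multiplicative ℤ) :
    (mapLeft (φ₂ := φ₂) f hf g).right = g.right := rfl

theorem rightHom_comp_mapLeft (f : N₁ →* N₂) (hf) :
    rightHom.comp (mapLeft (φ₁ := φ₁) (φ₂ := φ₂) f hf) = rightHom := rfl

end SemidirectProduct

namespace LaurentPolynomial

variable {R S : Type*} [CommRing R] [Ring S] [Algebra R S]

noncomputable def aevalUnit (u : Sˣ) : R[T;T⁻¹] →ₐ[R] S :=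
  AddMonoidAlgebra.lift R S ℤ ((Units.coeHom S).comp (zpowersHom Sˣ u))

@[simp] theorem aevalUnit_T (u : Sˣ) (n : ℤ) : aevalUnit (R := R) u (T n) = ↑(u ^ n) := by
  rw [aevalUnit, T, AddMonoidAlgebra.lift_single]
  simp

theorem isUnit_iff_exists_C_mul_T [IsDomain R] {f : R[T;T⁻¹]} :
    IsUnit f ↔ ∃ (u : Rˣ) (n : ℤ), f = C (u : R) * T n := by
  constructor
  · rintro ⟨⟨f, g, hfg, -⟩, rfl⟩
    obtain ⟨m, F, hF⟩ := f.exists_T_pow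
    obtain ⟨n, G, hG⟩ := g.exists_T_pow
    have hFG : F * G = Polynomial.X ^ (m + n) := Polynomial.toLaurent_injective <| by
      rw [map_mul, hF, hG, Polynomial.toLaurent_X_pow, mul_mul_mul_comm, hfg, one_mul, ← T_add,
        Nat.cast_add]
    obtain ⟨i, -, ⟨v, hv⟩⟩ := (dvd_prime_pow Polynomial.prime_X _).1 (Dvd.intro G hFG)
    obtain ⟨r, hr, hrv⟩ := Polynomial.isUnit_iff.1 v⁻¹.isUnit
    have hF' : F = Polynomial.C r * Polynomial.X ^ i := by
      rw [← hv, hrv, mul_comm, mul_assoc, Units.mul_inv, mul_one]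
    refine ⟨hr.unit, i - m, ?_⟩
    calc f = f * T m * T (-m) := by rw [mul_T_assoc, add_neg_cancel, T_zero, mul_one]
      _ = C r * T (i - m) := by
        rw [← hF, hF', map_mul, Polynomial.toLaurent_C, Polynomial.toLaurent_X_pow, mul_assoc,
          ← T_add, sub_eq_add_neg]
  · rintro ⟨u, n, rfl⟩
    exact (u.isUnit.map C).mul (isUnit_T n)

end LaurentPolynomial

open SemidirectProduct

local notation "Λ" => ℤ[T;T⁻¹]

noncomputable def tAction (M : Type*) [AddCommGroup M] [Module Λ M] :
    Multiplicative ℤ →* MulAut (Multiplicative M) :=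
  (MulAutMultiplicative M).symm.toMonoidHom.comp
    ((DistribMulAction.toAddAut Λˣ M).comp (AddMonoidAlgebra.of ℤ ℤ).toHomUnits)

@[simp] theorem tAction_apply (M : Type*) [AddCommGroup M] [Module Λ M] (n : Multiplicative ℤ)
    (x : Multiplicative M) : tAction M n x = ofAdd ((T (toAdd n) : Λ) • toAdd x) := rfl

abbrev FoxGroup := Multiplicative (Λ × Λ) ⋊[tAction (Λ × Λ)] Multiplicative ℤ

noncomputable def FoxGroup.linearMap (L : Λ × Λ →ₗ[Λ] Λ × Λ) : FoxGroup →* FoxGroup :=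
  mapLeft L.toAddMonoidHom.toMultiplicative fun x => L.map_smul (T 1 : Λ) (toAdd x)

@[simp] theorem FoxGroup.linearMap_left (L : Λ × Λ →ₗ[Λ] Λ × Λ) (g : FoxGroup) :
    (FoxGroup.linearMap L g).left = ofAdd (L (toAdd g.left)) := rfl

@[simp] theorem FoxGroup.linearMap_right (L : Λ × Λ →ₗ[Λ] Λ × Λ) (g : FoxGroup) :
    (FoxGroup.linearMap L g).right = g.right := rfl

noncomputable def fox : FreeGroup (Fin 2) →* FoxGroup :=
  FreeGroup.lift ![inl (ofAdd (1, 0)), ⟨ofAdd (0, 1), ofAdd 1⟩]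

@[simp] theorem fox_of_zero : fox (FreeGroup.of 0) = inl (ofAdd (1, 0)) := by
  simp [fox]

@[simp] theorem fox_of_one : fox (FreeGroup.of 1) = ⟨ofAdd (0, 1), ofAdd 1⟩ := by
  simp [fox]

theorem fox_fundamental (w : FreeGroup (Fin 2)) :
    (toAdd (fox w).left).2 * (T 1 - 1) = T (toAdd (fox w).right) - 1 := by
  let L := (LinearMap.snd Λ Λ Λ).smulRight ((T 1 - 1 : Λ), (0 : Λ))
  -- both sides send `a ↦ 1` and `b ↦ ⟨(T - 1, 0), 1⟩`
  have h : (FoxGroup.linearMap L).comp fox =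
      (MulAut.conj (inl (ofAdd (-1, 0)))).toMonoidHom.comp (inr.comp (rightHom.comp fox)) := by
    refine FreeGroup.ext_hom _ _ fun i => ?_
    fin_cases i <;>
      simp [L, SemidirectProduct.ext_iff, ← ofAdd_neg, ← ofAdd_add, sub_eq_neg_add]
  have key : (toAdd (fox w).left).2 * (T 1 - 1) = -1 + T (toAdd (fox w).right) := by
    simpa [L] using congrArg (fun g => (toAdd g.left).1) (DFunLike.congr_fun h w)
  linear_combination key

theorem fox_left_snd_eq_zero {w : FreeGroup (Fin 2)} (hw : (fox w).right = 1) :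
    (toAdd (fox w).left).2 = 0 := by
  have hT : (T 1 - 1 : Λ) ≠ 0 := by
    simpa using Polynomial.toLaurent_ne_zero.2 (Polynomial.X_sub_C_ne_zero (1 : ℤ))
  have := fox_fundamental w
  rw [hw, toAdd_one, T_zero, sub_self] at this
  exact (mul_eq_zero.1 this).resolve_right hT

noncomputable def foxJacobian (f : FreeGroup (Fin 2) →* FreeGroup (Fin 2)) :
    Λ × Λ →ₗ[Λ] Λ × Λ :=
  (LinearMap.fst Λ Λ Λ).smulRight (toAdd (fox (f (.of 0))).left) +
    (LinearMap.snd Λ Λ Λ).smulRight (toAdd (fox (f (.of 1))).left)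

theorem fox_comp_eq_jacobian {f : FreeGroup (Fin 2) →* FreeGroup (Fin 2)}
    (hf : rightHom.comp (fox.comp f) = rightHom.comp fox) :
    fox.comp f = (FoxGroup.linearMap (foxJacobian f)).comp fox := by
  refine FreeGroup.ext_hom _ _ fun i => ?_
  have := DFunLike.congr_fun hf (.of i)
  fin_cases i <;> simpa [SemidirectProduct.ext_iff, foxJacobian] using this

namespace NielsenEquiv

variable {G : Type*} [Group G] {n : ℕ}

theorem trans {S S' S'' : Fin n → G} (h : NielsenEquiv S S') (h' : NielsenEquiv S' S'') :
    NielsenEquiv S S'' := by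
  obtain ⟨φ, hφ⟩ := h
  obtain ⟨ψ, hψ⟩ := h'
  exact ⟨ψ.trans φ, by rw [← hψ, ← hφ]; rfl⟩

theorem of_mulEquiv (S : Fin n → G) (φ : FreeGroup (Fin n) ≃* FreeGroup (Fin n)) :
    NielsenEquiv S fun i => FreeGroup.lift S (φ (.of i)) :=
  ⟨φ, FreeGroup.ext_hom _ _ fun i => by simp⟩

end NielsenEquiv

noncomputable def FreeGroup.invGenerator {ι : Type*} [DecidableEq ι] (i : ι) :
    FreeGroup ι ≃* FreeGroup ι :=
  let f := FreeGroup.lift (Function.update FreeGroup.of i (FreeGroup.of i)⁻¹)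
  have hf : f.comp f = .id _ := FreeGroup.ext_hom _ _ fun j => by
    rcases eq_or_ne j i with rfl | hj <;> simp [f, Function.update_of_ne, *]
  f.toMulEquiv f hf hf

@[simp] theorem FreeGroup.invGenerator_of {ι : Type*} [DecidableEq ι] (i j : ι) :
    FreeGroup.invGenerator i (.of j) = if j = i then (.of i)⁻¹ else .of j := by
  rcases eq_or_ne j i with rfl | hj <;> simp [FreeGroup.invGenerator, Function.update_of_ne, *]

namespace GA

variable (A : GL2Z) (v v' : Fin 2 → ℤ)

def gens : Fin 2 → GA A := ![⟨ofAdd v, 1⟩, ⟨1, ofAdd 1⟩]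

@[simp] theorem gens_zero : gens A v 0 = inl (ofAdd v) := by simp [gens]

@[simp] theorem gens_one : gens A v 1 = inr (ofAdd 1) := by simp [gens]

theorem phiA_ofAdd_one (x : Fin 2 → ℤ) :
    phiA A (ofAdd 1) (ofAdd x) = ofAdd ((A : Matrix (Fin 2) (Fin 2) ℤ) *ᵥ x) := by
  rw [phiA, zpowersHom_apply, toAdd_ofAdd, zpow_one]
  rfl

noncomputable def evalVec : Λ × Λ →+ (Fin 2 → ℤ) :=
  AddMonoidHom.mk' (fun x => aevalUnit A x.1 *ᵥ v) fun x y => by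
    simp only [Prod.fst_add, map_add, add_mulVec]

theorem evalVec_smul (p : Λ) (x : Λ × Λ) :
    evalVec A v (p • x) = aevalUnit A p *ᵥ evalVec A v x := by
  show aevalUnit A (p * x.1) *ᵥ v = _
  rw [map_mul, ← mulVec_mulVec]
  rfl

theorem evalVec_intertwines (x : Multiplicative (Λ × Λ)) :
    (evalVec A v).toMultiplicative (tAction _ (ofAdd 1) x) =
      phiA A (ofAdd 1) ((evalVec A v).toMultiplicative x) := by
  simp only [tAction_apply, toAdd_ofAdd, AddMonoidHom.toMultiplicative_apply_apply, evalVec_smul,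
    aevalUnit_T, zpow_one, phiA_ofAdd_one]

noncomputable def foxEval : FoxGroup →* GA A :=
  mapLeft (evalVec A v).toMultiplicative (evalVec_intertwines A v)

theorem lift_gens : FreeGroup.lift (gens A v) = (foxEval A v).comp fox := by
  refine FreeGroup.ext_hom _ _ fun i => ?_
  fin_cases i <;> simp [gens, foxEval, evalVec, SemidirectProduct.ext_iff, -mulVec_fin_two]

theorem phiA_apply (n : ℤ) (x : Fin 2 → ℤ) :
    phiA A (ofAdd n) (ofAdd x) = ofAdd (((A ^ n : GL2Z) : Matrix (Fin 2) (Fin 2) ℤ) *ᵥ x) := by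
  simpa [evalVec, -mulVec_fin_two] using
    (apply_action_of_apply_action_one _ (evalVec_intertwines A x) (ofAdd n) (ofAdd (1, 0))).symm

theorem nielsenEquiv_gens_zpow_mulVec (k : ℤ) :
    NielsenEquiv (gens A v) (gens A (((A ^ k : GL2Z) : Matrix (Fin 2) (Fin 2) ℤ) *ᵥ v)) := by
  convert NielsenEquiv.of_mulEquiv (gens A v) (MulAut.conj (.of 1 ^ k)) using 1
  funext i
  fin_cases i
  · simp only [Fin.zero_eta, Fin.isValue]
    rw [MulAut.conj_apply, map_mul, map_mul, map_inv, map_zpow, FreeGroup.lift_apply_of,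
      FreeGroup.lift_apply_of, gens_zero, gens_one, gens_zero, ← map_zpow, ← ofAdd_zsmul,
      smul_eq_mul, mul_one, ← map_inv, ← inl_aut, phiA_apply]
  · simp only [Fin.mk_one, Fin.isValue]
    rw [MulAut.conj_apply, (Commute.zpow_left (.refl _) k).mul_inv_cancel]
    simp

theorem nielsenEquiv_gens_neg : NielsenEquiv (gens A v) (gens A (-v)) := by
  convert NielsenEquiv.of_mulEquiv (gens A v) (FreeGroup.invGenerator 0) using 1
  funext i
  fin_cases i <;> simp [gens]

theorem nielsenEquiv_gens_of_orbit
    (h : ∃ k : ℤ, v' = ((A ^ k : GL2Z) : Matrix (Fin 2) (Fin 2) ℤ) *ᵥ v ∨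
      v' = -(((A ^ k : GL2Z) : Matrix (Fin 2) (Fin 2) ℤ) *ᵥ v)) :
    NielsenEquiv (gens A v) (gens A v') := by
  obtain ⟨k, rfl | rfl⟩ := h
  · exact nielsenEquiv_gens_zpow_mulVec A v k
  · exact (nielsenEquiv_gens_zpow_mulVec A v k).trans (nielsenEquiv_gens_neg A _)

theorem orbit_of_nielsenEquiv_gens (h : NielsenEquiv (gens A v) (gens A v')) :
    ∃ k : ℤ, v' = ((A ^ k : GL2Z) : Matrix (Fin 2) (Fin 2) ℤ) *ᵥ v ∨
      v' = -(((A ^ k : GL2Z) : Matrix (Fin 2) (Fin 2) ℤ) *ᵥ v) := by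
  obtain ⟨φ, hφ⟩ := h
  rw [lift_gens, lift_gens, MonoidHom.comp_assoc] at hφ
  have hright : rightHom.comp (fox.comp φ.toMonoidHom) = rightHom.comp fox := by
    simpa only [← MonoidHom.comp_assoc, foxEval, rightHom_comp_mapLeft] using
      congrArg rightHom.comp hφ
  set w := φ.symm (.of 0)
  have hw : (fox w).right = 1 := by
    simpa [w] using (DFunLike.congr_fun hright w).symm
  have hunit : (toAdd (fox w).left).1 * (toAdd (fox (φ (.of 0))).left).1 = 1 := by
    simpa [w, foxJacobian, fox_left_snd_eq_zero hw] using
      (congrArg (fun g => (toAdd g.left).1) (DFunLike.congr_fun (fox_comp_eq_jacobian hright) w)).symm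
  have hv' : v' = aevalUnit A (toAdd (fox (φ (.of 0))).left).1 *ᵥ v := by
    simpa [foxEval, evalVec, -mulVec_fin_two] using
      (congrArg (fun g => toAdd g.left) (DFunLike.congr_fun hφ (.of 0))).symm
  obtain ⟨u, k, hk⟩ := isUnit_iff_exists_C_mul_T.1 (IsUnit.of_mul_eq_one_right _ hunit)
  refine ⟨k, ?_⟩
  rcases Int.units_eq_one_or u with rfl | rfl <;> simp [hv', hk, neg_mulVec, -mulVec_fin_two]

end GA

theorem mem_HA_iff {A B : GL2Z} : B ∈ HA A ↔ ∃ k : ℤ, B = A ^ k ∨ B = -A ^ k := by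
  refine ⟨fun hB => ?_, ?_⟩
  · induction hB using Subgroup.closure_induction with
    | mem x hx =>
      rcases hx with rfl | rfl
      exacts [⟨1, .inl (zpow_one x).symm⟩, ⟨0, .inr (by simp)⟩]
    | one => exact ⟨0, .inl (zpow_zero A).symm⟩
    | mul x y _ _ hx hy =>
      obtain ⟨k, hk⟩ := hx
      obtain ⟨j, hj⟩ := hy
      refine ⟨k + j, ?_⟩
      rcases hk with rfl | rfl <;> rcases hj with rfl | rfl <;> simp [_root_.zpow_add]
    | inv x _ hx =>
      obtain ⟨k, hk⟩ := hx
      refine ⟨-k, ?_⟩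
      rcases hk with rfl | rfl <;> simp
  · have hA : A ∈ HA A := Subgroup.subset_closure (Set.mem_insert _ _)
    have hneg : -1 ∈ HA A := Subgroup.subset_closure (Set.mem_insert_of_mem _ rfl)
    rintro ⟨k, rfl | rfl⟩
    · exact zpow_mem hA k
    · simpa using mul_mem hneg (zpow_mem hA k)

theorem exists_mem_HA_mulVec_eq_iff (A : GL2Z) (v v' : Fin 2 → ℤ) :
    (∃ B ∈ HA A, (B : Matrix (Fin 2) (Fin 2) ℤ) *ᵥ v = v') ↔
      ∃ k : ℤ, v' = ((A ^ k : GL2Z) : Matrix (Fin 2) (Fin 2) ℤ) *ᵥ v ∨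
        v' = -(((A ^ k : GL2Z) : Matrix (Fin 2) (Fin 2) ℤ) *ᵥ v) := by
  simp only [mem_HA_iff]
  constructor
  · rintro ⟨B, ⟨k, rfl | rfl⟩, rfl⟩
    exacts [⟨k, .inl rfl⟩, ⟨k, .inr (by simp [neg_mulVec])⟩]
  · rintro ⟨k, rfl | rfl⟩
    exacts [⟨_, ⟨k, .inl rfl⟩, rfl⟩, ⟨_, ⟨k, .inr rfl⟩, by simp [neg_mulVec]⟩]

theorem nielsen_equiv_iff_same_orbit_general (A : GL2Z) (v v' : Fin 2 → ℤ) :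
    (NielsenEquiv (![⟨Multiplicative.ofAdd v, 1⟩, ⟨1, Multiplicative.ofAdd 1⟩] : Fin 2 → GA A)
        ![⟨Multiplicative.ofAdd v', 1⟩, ⟨1, Multiplicative.ofAdd 1⟩] ↔
      ∃ k : ℤ, v' = ((A ^ k : GL2Z) : Matrix (Fin 2) (Fin 2) ℤ).mulVec v ∨
        v' = -((A ^ k : GL2Z) : Matrix (Fin 2) (Fin 2) ℤ).mulVec v) ∧
    (NielsenEquiv (![⟨Multiplicative.ofAdd v, 1⟩, ⟨1, Multiplicative.ofAdd 1⟩] : Fin 2 → GA A)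
        ![⟨Multiplicative.ofAdd v', 1⟩, ⟨1, Multiplicative.ofAdd 1⟩] ↔
      ∃ B ∈ HA A, (B : Matrix (Fin 2) (Fin 2) ℤ).mulVec v = v') := by
  have key : NielsenEquiv (GA.gens A v) (GA.gens A v') ↔
      ∃ k : ℤ, v' = ((A ^ k : GL2Z) : Matrix (Fin 2) (Fin 2) ℤ) *ᵥ v ∨
        v' = -(((A ^ k : GL2Z) : Matrix (Fin 2) (Fin 2) ℤ) *ᵥ v) :=
    ⟨GA.orbit_of_nielsenEquiv_gens A v v', GA.nielsenEquiv_gens_of_orbit A v v'⟩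
  exact ⟨key, key.trans (exists_mem_HA_mulVec_eq_iff A v v').symm⟩

theorem nielsen_equiv_iff_same_orbit (A : GL2Z) (v v' : Fin 2 → ℤ)
    (hv : Submodule.span ℤ ({v, (A : Matrix (Fin 2) (Fin 2) ℤ).mulVec v} : Set (Fin 2 → ℤ)) = ⊤)
    (hv' : Submodule.span ℤ
      ({v', (A : Matrix (Fin 2) (Fin 2) ℤ).mulVec v'} : Set (Fin 2 → ℤ)) = ⊤) :
    (NielsenEquiv (![⟨Multiplicative.ofAdd v, 1⟩, ⟨1, Multiplicative.ofAdd 1⟩] : Fin 2 → GA A)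
        ![⟨Multiplicative.ofAdd v', 1⟩, ⟨1, Multiplicative.ofAdd 1⟩] ↔
      ∃ k : ℤ, v' = ((A ^ k : GL2Z) : Matrix (Fin 2) (Fin 2) ℤ).mulVec v ∨
        v' = -((A ^ k : GL2Z) : Matrix (Fin 2) (Fin 2) ℤ).mulVec v) ∧
    (NielsenEquiv (![⟨Multiplicative.ofAdd v, 1⟩, ⟨1, Multiplicative.ofAdd 1⟩] : Fin 2 → GA A)
        ![⟨Multiplicative.ofAdd v', 1⟩, ⟨1, Multiplicative.ofAdd 1⟩] ↔
      ∃ B ∈ HA A, (B : Matrix (Fin 2) (Fin 2) ℤ).mulVec v = v') :=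
  nielsen_equiv_iff_same_orbit_general A v v'
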